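/- arXiv:1701.05623 — 4 statements merged into one kernel-verified Lean document; each statement's English description precedes it below -/
import Mathlib

section
/- For every integer n ≥ 3 there exists a unitary matrix U = (u_{ij}) ∈ U(n) such that u_{kj} = 0 for all 2 ≤ j ≤ k−1 with 3 ≤ k ≤ n (i.e. the lower-right (n−1)×(n−1) block is upper triangular), and 0 < |u_{ll}| < 1 for 2 ≤ l ≤ n. -/
/-!
Take the real Helmert matrix. Its first column is constant, and for `j ≥ 1` its `j`-th column is
proportional to `(1, …, 1, -j, 0, …, 0)` with `j` leading ones, so the block below row `0` is
upper triangular. Pairing column `k ≥ 1` with a vector `v` gives `∑_{i<k} v i - k v k`, which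
vanishes for the constant column and for every column `1 ≤ j < k` (it sums to zero and vanishes
at `k`); so the columns are orthogonal. The diagonal entry in column `l ≥ 1` has modulus
`l / √(l (l + 1)) = √(l / (l + 1))`.
-/

open Finset

lemma Matrix.map_algebraMap_mem_unitaryGroup {n 𝕜 : Type*} [Fintype n] [DecidableEq n]
    [RCLike 𝕜] {A : Matrix n n ℝ} (hA : A ∈ Matrix.orthogonalGroup n ℝ) :
    A.map (algebraMap ℝ 𝕜) ∈ Matrix.unitaryGroup n 𝕜 := by
  rw [Matrix.mem_unitaryGroup_iff'] at hA ⊢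
  have hstar : star (A.map (algebraMap ℝ 𝕜)) = (star A).map (algebraMap ℝ 𝕜) := by
    ext; simp
  rw [hstar, ← Matrix.map_mul, hA, Matrix.map_one _ (map_zero _) (map_one _)]

def helmertCol (j i : ℕ) : ℝ :=
  if j = 0 then 1 else if i < j then 1 else if i = j then -j else 0

def helmertNormSq (n j : ℕ) : ℝ :=
  if j = 0 then n else j * (j + 1)

lemma helmertCol_zero (i : ℕ) : helmertCol 0 i = 1 := if_pos rfl

lemma helmertCol_of_lt {i j : ℕ} (hj : j ≠ 0) (h : i < j) : helmertCol j i = 1 := by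
  rw [helmertCol, if_neg hj, if_pos h]

lemma helmertCol_self {j : ℕ} (hj : j ≠ 0) : helmertCol j j = -j := by
  rw [helmertCol, if_neg hj, if_neg (lt_irrefl j), if_pos rfl]

lemma helmertCol_of_gt {i j : ℕ} (hj : j ≠ 0) (h : j < i) : helmertCol j i = 0 := by
  rw [helmertCol, if_neg hj, if_neg (by omega), if_neg (by omega)]

lemma sum_mul_helmertCol (f : ℕ → ℝ) {n k : ℕ} (hk : k ≠ 0) (hkn : k < n) :
    ∑ i ∈ range n, f i * helmertCol k i = ∑ i ∈ range k, f i - k * f k := by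
  rw [← sum_subset (range_subset_range.mpr hkn) fun i _ hi => by
      rw [helmertCol_of_gt hk (by simp at hi; omega), mul_zero],
    sum_range_succ, sum_congr rfl fun i hi => by rw [helmertCol_of_lt hk (mem_range.mp hi),
      mul_one], helmertCol_self hk]
  ring

lemma sum_helmertCol {j m : ℕ} (hj : j ≠ 0) (hjm : j < m) :
    ∑ i ∈ range m, helmertCol j i = 0 := by
  simpa using sum_mul_helmertCol 1 hj hjm

lemma sum_helmertCol_mul_helmertCol_of_lt {n j k : ℕ} (hjk : j < k) (hkn : k < n) :
    ∑ i ∈ range n, helmertCol j i * helmertCol k i = 0 := by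
  rw [sum_mul_helmertCol _ (by omega) hkn]
  rcases eq_or_ne j 0 with rfl | hj
  · simp [helmertCol_zero]
  · rw [sum_helmertCol hj hjk, helmertCol_of_gt hj hjk]
    ring

lemma sum_helmertCol_mul_self {n j : ℕ} (hjn : j < n) :
    ∑ i ∈ range n, helmertCol j i * helmertCol j i = helmertNormSq n j := by
  rcases eq_or_ne j 0 with rfl | hj
  · simp [helmertCol_zero, helmertNormSq]
  · rw [sum_mul_helmertCol _ hj hjn,
      sum_congr rfl fun i hi => helmertCol_of_lt hj (mem_range.mp hi), helmertCol_self hj,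
      helmertNormSq, if_neg hj]
    simp only [sum_const, card_range, nsmul_eq_mul, mul_one, mul_neg, sub_neg_eq_add]
    ring

lemma helmertNormSq_pos {n j : ℕ} (hjn : j < n) : 0 < helmertNormSq n j := by
  have : (0 : ℝ) < n := by exact_mod_cast hjn.trans_le' (Nat.zero_le j)
  unfold helmertNormSq
  split_ifs <;> positivity

noncomputable def helmertMatrix (n : ℕ) : Matrix (Fin n) (Fin n) ℝ :=
  Matrix.of fun i j => helmertCol j i / √(helmertNormSq n j)

lemma helmertMatrix_mem_orthogonalGroup (n : ℕ) :
    helmertMatrix n ∈ Matrix.orthogonalGroup (Fin n) ℝ := by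
  rw [Matrix.mem_orthogonalGroup_iff']
  ext j k
  have hsum : ∑ i : Fin n, helmertCol j i * helmertCol k i =
      if j = k then helmertNormSq n j else 0 := by
    rw [Fin.sum_univ_eq_sum_range (fun i => helmertCol j i * helmertCol k i)]
    rcases lt_trichotomy j k with h | rfl | h
    · rw [sum_helmertCol_mul_helmertCol_of_lt h k.isLt, if_neg h.ne]
    · rw [sum_helmertCol_mul_self j.isLt, if_pos rfl]
    · simp_rw [mul_comm (helmertCol j _)]
      rw [sum_helmertCol_mul_helmertCol_of_lt h j.isLt, if_neg h.ne']
  have hpos := helmertNormSq_pos j.isLt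
  simp only [Matrix.mul_apply, Matrix.transpose_apply, helmertMatrix, Matrix.of_apply,
    div_mul_div_comm, ← sum_div, hsum, Matrix.one_apply]
  split_ifs with h
  · subst h
    rw [← sq, Real.sq_sqrt hpos.le, div_self hpos.ne']
  · exact zero_div _

lemma helmertMatrix_apply_of_lt {n : ℕ} {i j : Fin n} (hj : (j : ℕ) ≠ 0) (h : (j : ℕ) < i) :
    helmertMatrix n i j = 0 := by
  simp [helmertMatrix, helmertCol_of_gt hj h]

lemma abs_helmertMatrix_self_mem_Ioo {n : ℕ} {l : Fin n} (hl : (l : ℕ) ≠ 0) :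
    |helmertMatrix n l l| ∈ Set.Ioo 0 1 := by
  have hl' : (0 : ℝ) < l := by exact_mod_cast Nat.pos_of_ne_zero hl
  have hroot : (l : ℝ) < √(l * (l + 1)) := Real.lt_sqrt_of_sq_lt (by nlinarith)
  rw [helmertMatrix, Matrix.of_apply, helmertCol_self hl, helmertNormSq, if_neg hl, abs_div,
    abs_neg, Nat.abs_cast, abs_of_pos (hl'.trans hroot)]
  exact ⟨by positivity, (div_lt_one (hl'.trans hroot)).mpr hroot⟩

theorem stmt_4_general (n : ℕ) :
    ∃ U : Matrix (Fin n) (Fin n) ℂ, U ∈ Matrix.unitaryGroup (Fin n) ℂ ∧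
      (∀ k j : Fin n, 1 ≤ (j : ℕ) → (j : ℕ) < (k : ℕ) → U k j = 0) ∧
      (∀ l : Fin n, 1 ≤ (l : ℕ) →
        0 < ‖U l l‖ ∧ ‖U l l‖ < 1) := by
  refine ⟨(helmertMatrix n).map (algebraMap ℝ ℂ),
    Matrix.map_algebraMap_mem_unitaryGroup (helmertMatrix_mem_orthogonalGroup n), ?_, ?_⟩
  · intro k j hj hjk
    simp [helmertMatrix_apply_of_lt (by omega : (j : ℕ) ≠ 0) hjk]
  · intro l hl
    simpa using abs_helmertMatrix_self_mem_Ioo (by omega : (l : ℕ) ≠ 0)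

/-- For `n ≥ 3` there exists a unitary matrix whose lower-right
`(n-1)×(n-1)` block is upper triangular with all diagonal entries of modulus
strictly between 0 and 1. -/
theorem stmt_4 (n : ℕ) (hn : 3 ≤ n) :
    ∃ U : Matrix (Fin n) (Fin n) ℂ, U ∈ Matrix.unitaryGroup (Fin n) ℂ ∧
      (∀ k j : Fin n, 1 ≤ (j : ℕ) → (j : ℕ) < (k : ℕ) → U k j = 0) ∧
      (∀ l : Fin n, 1 ≤ (l : ℕ) →
        0 < ‖U l l‖ ∧ ‖U l l‖ < 1) :=
  stmt_4_general n
end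

section
/- For every integer n ≥ 3 and every ζ ∈ ℂ with 0 < |ζ| < 1, there exists a unitary matrix U = (u_{ij}) ∈ U(n) such that u_{kj} = 0 for 2 ≤ j ≤ k−1, 3 ≤ k ≤ n, and u₂₂ = u₃₃ = ⋯ = u_{nn} = ζ. -/
/-!
Let `w = √(1 - |ζ|²)` and let `R_k` be the unitary acting on the coordinates `0, k` by
`!![-conj ζ, w; w, ζ]` and as the identity elsewhere. Take `U = R_1 ⋯ R_{n-1}`.
Right multiplication by `R_k` only changes columns `0` and `k`: column `k`, still `e_k` before,
becomes `w • c + ζ • e_k`, where `c` is the current column `0`, and is never changed afterwards;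
column `0` becomes `-conj ζ • c + w • e_k`, so before step `k` it is supported on rows `< k`.
Hence below the first row and column, `U` is upper triangular with diagonal `ζ`.
-/

open Matrix ComplexConjugate

namespace Matrix

variable {ι κ α : Type*} [Fintype ι] [DecidableEq ι] [Fintype κ] [DecidableEq κ]
  [CommRing α] [StarRing α]

theorem one_add_conjTranspose_mul_sub_one_mul_mem_unitaryGroup {P : Matrix κ ι α}
    (hP : P * Pᴴ = 1) {G : Matrix κ κ α} (hG : G ∈ unitaryGroup κ α) :
    1 + Pᴴ * (G - 1) * P ∈ unitaryGroup ι α := by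
  rw [mem_unitaryGroup_iff', star_eq_conjTranspose] at hG ⊢
  simp only [conjTranspose_add, conjTranspose_mul, conjTranspose_sub, conjTranspose_one,
    conjTranspose_conjTranspose, ← Matrix.mul_assoc]
  calc (1 + Pᴴ * (Gᴴ - 1) * P) * (1 + Pᴴ * (G - 1) * P)
      = 1 + Pᴴ * ((Gᴴ - 1) + (G - 1) + (Gᴴ - 1) * (P * Pᴴ) * (G - 1)) * P := by
        simp only [Matrix.mul_add, Matrix.add_mul, Matrix.mul_assoc, Matrix.one_mul,
          Matrix.mul_one]
        abel
    _ = 1 + Pᴴ * (Gᴴ * G - 1) * P := by rw [hP, Matrix.mul_one]; congr 3; noncomm_ring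
    _ = 1 := by rw [hG, sub_self, Matrix.mul_zero, Matrix.zero_mul, add_zero]

/-- `G` acting on the coordinates `e κ`, and the identity on the remaining ones. -/
def extendById (e : κ → ι) (G : Matrix κ κ α) : Matrix ι ι α :=
  1 + ((1 : Matrix ι ι α).submatrix e id)ᴴ * (G - 1) * (1 : Matrix ι ι α).submatrix e id

theorem extendById_mem_unitaryGroup {e : κ → ι} (he : Function.Injective e) {G : Matrix κ κ α}
    (hG : G ∈ unitaryGroup κ α) : extendById e G ∈ unitaryGroup ι α := by
  refine one_add_conjTranspose_mul_sub_one_mul_mem_unitaryGroup ?_ hG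
  rw [conjTranspose_submatrix, conjTranspose_one, ← submatrix_mul _ _ _ _ _ Function.bijective_id,
    Matrix.mul_one, submatrix_one _ he]

theorem mul_extendById (e : κ → ι) (G : Matrix κ κ α) (X : Matrix ι ι α) :
    X * extendById e G = X + X.submatrix id e * (G - 1) * (1 : Matrix ι ι α).submatrix e id := by
  have : X * ((1 : Matrix ι ι α).submatrix e id)ᴴ = X.submatrix id e := by
    ext i r; simp [mul_apply, one_apply]
  rw [extendById, Matrix.mul_add, Matrix.mul_one, ← Matrix.mul_assoc, ← Matrix.mul_assoc, this]

theorem mul_extendById_apply_of_notMem (e : κ → ι) (G : Matrix κ κ α) (X : Matrix ι ι α)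
    (i : ι) {j : ι} (hj : j ∉ Set.range e) : (X * extendById e G) i j = X i j := by
  have : ∀ s, e s ≠ j := fun s h => hj ⟨s, h⟩
  rw [mul_extendById]
  simp [mul_apply, one_apply, this]

theorem mul_extendById_apply_image {e : κ → ι} (he : Function.Injective e) (G : Matrix κ κ α)
    (X : Matrix ι ι α) (i : ι) (s : κ) :
    (X * extendById e G) i (e s) = ∑ r, X i (e r) * G r s := by
  rw [mul_extendById]
  simp [mul_apply, one_apply, he.eq_iff, mul_sub]

end Matrix

noncomputable def rotBlock (ζ : ℂ) : Matrix (Fin 2) (Fin 2) ℂ :=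
  let w : ℂ := (√(1 - ‖ζ‖ ^ 2) : ℝ)
  !![-conj ζ, w; w, ζ]

theorem rotBlock_mem_unitaryGroup {ζ : ℂ} (hζ : ‖ζ‖ ≤ 1) :
    rotBlock ζ ∈ Matrix.unitaryGroup (Fin 2) ℂ := by
  have hw : ((√(1 - ‖ζ‖ ^ 2) : ℝ) : ℂ) * (√(1 - ‖ζ‖ ^ 2) : ℝ) = 1 - conj ζ * ζ := by
    rw [← Complex.ofReal_mul, Real.mul_self_sqrt (by nlinarith [norm_nonneg ζ]), Complex.conj_mul']
    push_cast; ring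
  rw [Matrix.mem_unitaryGroup_iff', rotBlock]
  generalize √(1 - ‖ζ‖ ^ 2) = w at hw ⊢
  ext i j
  fin_cases i <;> fin_cases j <;>
    simp [Matrix.mul_apply, Fin.sum_univ_two, Complex.star_def, -RCLike.star_def] <;>
    grind

section Givens

variable {n : ℕ} (ζ : ℂ)

noncomputable def givens (k : Fin (n + 1)) : Matrix (Fin (n + 1)) (Fin (n + 1)) ℂ :=
  Matrix.extendById ![0, k] (rotBlock ζ)

variable {ζ} {k : Fin (n + 1)} (X : Matrix (Fin (n + 1)) (Fin (n + 1)) ℂ)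

theorem pair_zero_injective (hk : k ≠ 0) : Function.Injective ![(0 : Fin (n + 1)), k] := by
  intro a b hab
  fin_cases a <;> fin_cases b <;> simp_all [eq_comm]

theorem givens_mem_unitaryGroup (hk : k ≠ 0) (hζ : ‖ζ‖ ≤ 1) :
    givens ζ k ∈ Matrix.unitaryGroup (Fin (n + 1)) ℂ :=
  Matrix.extendById_mem_unitaryGroup (pair_zero_injective hk) (rotBlock_mem_unitaryGroup hζ)

theorem mul_givens_apply_zero (hk : k ≠ 0) (i : Fin (n + 1)) :
    (X * givens ζ k) i 0 = X i 0 * -conj ζ + X i k * (√(1 - ‖ζ‖ ^ 2) : ℝ) := by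
  simpa [givens, rotBlock, Fin.sum_univ_two] using
    Matrix.mul_extendById_apply_image (pair_zero_injective hk) (rotBlock ζ) X i 0

theorem mul_givens_apply_self (hk : k ≠ 0) (i : Fin (n + 1)) :
    (X * givens ζ k) i k = X i 0 * (√(1 - ‖ζ‖ ^ 2) : ℝ) + X i k * ζ := by
  simpa [givens, rotBlock, Fin.sum_univ_two] using
    Matrix.mul_extendById_apply_image (pair_zero_injective hk) (rotBlock ζ) X i 1

theorem mul_givens_apply_of_ne (i : Fin (n + 1)) {j : Fin (n + 1)} (hj0 : j ≠ 0) (hjk : j ≠ k) :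
    (X * givens ζ k) i j = X i j := by
  refine Matrix.mul_extendById_apply_of_notMem _ _ X i ?_
  rintro ⟨r, rfl⟩
  fin_cases r <;> simp_all

end Givens

section RotProd

variable {n : ℕ} {ζ : ℂ}

noncomputable def rotProd (ζ : ℂ) : Fin (n + 1) → Matrix (Fin (n + 1)) (Fin (n + 1)) ℂ :=
  Fin.induction 1 fun m U => U * givens ζ m.succ

theorem rotProd_zero : rotProd ζ (0 : Fin (n + 1)) = 1 := rfl

theorem rotProd_succ (m : Fin n) :
    rotProd ζ m.succ = rotProd ζ m.castSucc * givens ζ m.succ :=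
  Fin.induction_succ _ _ m

theorem rotProd_mem_unitaryGroup (hζ : ‖ζ‖ ≤ 1) (m : Fin (n + 1)) :
    rotProd ζ m ∈ Matrix.unitaryGroup (Fin (n + 1)) ℂ := by
  induction m using Fin.induction with
  | zero => exact one_mem _
  | succ m ih => rw [rotProd_succ]; exact mul_mem ih (givens_mem_unitaryGroup m.succ_ne_zero hζ)

theorem rotProd_apply_of_lt {m j : Fin (n + 1)} (h : m < j) (i : Fin (n + 1)) :
    rotProd ζ m i j = (1 : Matrix (Fin (n + 1)) (Fin (n + 1)) ℂ) i j := by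
  induction m using Fin.induction with
  | zero => rw [rotProd_zero]
  | succ m ih =>
    rw [rotProd_succ, mul_givens_apply_of_ne _ _ (Fin.ne_zero_of_lt h) h.ne',
      ih (Fin.castSucc_lt_succ.trans h)]

theorem rotProd_apply_zero_of_lt {m i : Fin (n + 1)} (h : m < i) : rotProd ζ m i 0 = 0 := by
  induction m using Fin.induction with
  | zero => rw [rotProd_zero, one_apply_ne h.ne']
  | succ m ih =>
    rw [rotProd_succ, mul_givens_apply_zero _ m.succ_ne_zero, ih (Fin.castSucc_lt_succ.trans h),
      rotProd_apply_of_lt Fin.castSucc_lt_succ, one_apply_ne h.ne']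
    ring

theorem rotProd_apply_of_le {m j : Fin (n + 1)} (hj : j ≠ 0) (h : j ≤ m) (i : Fin (n + 1)) :
    rotProd ζ m i j = rotProd ζ j i j := by
  induction m using Fin.induction with
  | zero => exact absurd (Fin.le_zero_iff.mp h) hj
  | succ m ih =>
    rcases h.eq_or_lt with rfl | hlt
    · rfl
    · rw [rotProd_succ, mul_givens_apply_of_ne _ _ hj hlt.ne, ih (Fin.le_castSucc_iff.mpr hlt)]

theorem rotProd_succ_apply_succ (m : Fin n) (i : Fin (n + 1)) :
    rotProd ζ m.succ i m.succ = rotProd ζ m.castSucc i 0 * (√(1 - ‖ζ‖ ^ 2) : ℝ) +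
      (1 : Matrix (Fin (n + 1)) (Fin (n + 1)) ℂ) i m.succ * ζ := by
  rw [rotProd_succ, mul_givens_apply_self _ m.succ_ne_zero,
    rotProd_apply_of_lt Fin.castSucc_lt_succ]

theorem rotProd_apply_of_le_of_le {m i j : Fin (n + 1)} (hj : j ≠ 0) (hjm : j ≤ m) (hji : j ≤ i) :
    rotProd ζ m i j = if i = j then ζ else 0 := by
  obtain ⟨j, rfl⟩ := Fin.exists_succ_eq.mpr hj
  rw [rotProd_apply_of_le hj hjm, rotProd_succ_apply_succ,
    rotProd_apply_zero_of_lt (Fin.castSucc_lt_succ.trans_le hji), one_apply]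
  split_ifs <;> ring

end RotProd

theorem stmt_5_general (n : ℕ) (hn : 3 ≤ n) (ζ : ℂ)
    (h1 : ‖ζ‖ < 1) :
    ∃ U : Matrix (Fin n) (Fin n) ℂ, U ∈ Matrix.unitaryGroup (Fin n) ℂ ∧
      (∀ k j : Fin n, 1 ≤ (j : ℕ) → (j : ℕ) < (k : ℕ) → U k j = 0) ∧
      (∀ l : Fin n, 1 ≤ (l : ℕ) → U l l = ζ) := by
  obtain ⟨n, rfl⟩ : ∃ m, n = m + 1 := ⟨n - 1, by omega⟩
  have ne_zero {j : Fin (n + 1)} (hj : 1 ≤ (j : ℕ)) : j ≠ 0 := by rintro rfl; simp at hj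
  refine ⟨rotProd ζ (Fin.last n), rotProd_mem_unitaryGroup h1.le _, fun k j hj hjk => ?_,
    fun l hl => ?_⟩
  · rw [rotProd_apply_of_le_of_le (ne_zero hj) (Fin.le_last j) hjk.le, if_neg (Fin.ne_of_gt hjk)]
  · rw [rotProd_apply_of_le_of_le (ne_zero hl) (Fin.le_last l) le_rfl, if_pos rfl]

/-- For `n ≥ 3` and `ζ` with `0 < |ζ| < 1` there exists a unitary matrix
whose lower-right `(n-1)×(n-1)` block is upper triangular with all diagonal entries
equal to `ζ`. -/
theorem stmt_5 (n : ℕ) (hn : 3 ≤ n) (ζ : ℂ)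
    (h0 : 0 < ‖ζ‖) (h1 : ‖ζ‖ < 1) :
    ∃ U : Matrix (Fin n) (Fin n) ℂ, U ∈ Matrix.unitaryGroup (Fin n) ℂ ∧
      (∀ k j : Fin n, 1 ≤ (j : ℕ) → (j : ℕ) < (k : ℕ) → U k j = 0) ∧
      (∀ l : Fin n, 1 ≤ (l : ℕ) → U l l = ζ) :=
  stmt_5_general n hn ζ h1
end

section
/- Fix n ≥ 2 and ζ ∈ ℂ with (n−1)/(n+1) < |ζ| < 1, and let R_ζ(z) := z·((\bar{ζ}z − 1)/(z − ζ))ⁿ, with p(z) = z(\bar{ζ}z−1)ⁿ and q(z) = (z−ζ)ⁿ. Then the two roots a₊(ζ), a₋(ζ) of the quadratic factor \bar{ζ}(n+1)z² − ((n+1)|ζ|² + (1−n))z + ... arising in p'q − pq' besides ζ and 1/\bar{ζ}, namely a_±(ζ) = ((n+1)|ζ|² + (1−n) ± √((n−1)² − (2n²+2)|ζ|² + (n+1)²|ζ|⁴))/(2\bar{ζ}), satisfy |a₊(ζ)| = |a₋(ζ)| = 1. -/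
/-- `a₊(ζ)` when the discriminant is negative (imaginary square root). -/
noncomputable def aPlusIm (n : ℕ) (ζ : ℂ) : ℂ :=
  (((((n : ℝ) + 1) * (‖ζ‖)^2 + (1 - (n : ℝ)) : ℝ) : ℂ) +
      Complex.I * ((Real.sqrt (-(((n : ℝ) - 1)^2 - (2 * (n : ℝ)^2 + 2) * (‖ζ‖)^2
        + ((n : ℝ) + 1)^2 * (‖ζ‖)^4)) : ℝ) : ℂ)) /
    (2 * (starRingEnd ℂ) ζ)

/-- `a₋(ζ)` when the discriminant is negative (imaginary square root). -/
noncomputable def aMinusIm (n : ℕ) (ζ : ℂ) : ℂ :=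
  (((((n : ℝ) + 1) * (‖ζ‖)^2 + (1 - (n : ℝ)) : ℝ) : ℂ) -
      Complex.I * ((Real.sqrt (-(((n : ℝ) - 1)^2 - (2 * (n : ℝ)^2 + 2) * (‖ζ‖)^2
        + ((n : ℝ) + 1)^2 * (‖ζ‖)^4)) : ℝ) : ℂ)) /
    (2 * (starRingEnd ℂ) ζ)

/-!
Write `r = |ζ|`, `A = (n+1)r² + 1 - n` and `D` for the discriminant. The numerators of
`a_±(ζ)` are `A ± i√(-D)`, of modulus `√(A² - D)`, and `A² - D = 4r²` identically in `n` and
`r`. So both numerators have the modulus `2r = |2ζ̄|` of the denominator. The bounds on `|ζ|`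
give `D ≤ 0` through the factorisation `-D = (1 - r²)((n+1)²r² - (n-1)²)`.
-/

open Complex

lemma norm_add_I_mul_div_eq_one {x y : ℝ} {c : ℂ} (hc : c ≠ 0) (h : x ^ 2 + y ^ 2 = ‖c‖ ^ 2) :
    ‖((x : ℂ) + I * y) / c‖ = 1 := by
  have hnum : ‖(x : ℂ) + I * y‖ = ‖c‖ := by
    rw [mul_comm, norm_add_mul_I, h, Real.sqrt_sq (norm_nonneg c)]
  rw [norm_div, hnum, div_self (norm_ne_zero_iff.mpr hc)]

lemma norm_sub_I_mul_div_eq_one {x y : ℝ} {c : ℂ} (hc : c ≠ 0) (h : x ^ 2 + y ^ 2 = ‖c‖ ^ 2) :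
    ‖((x : ℂ) - I * y) / c‖ = 1 := by
  have h' : x ^ 2 + (-y) ^ 2 = ‖c‖ ^ 2 := by rw [neg_sq, h]
  simpa [sub_eq_add_neg] using norm_add_I_mul_div_eq_one hc h'

lemma discriminant_nonpos {m r : ℝ} (hm : 1 ≤ m) (hr₁ : (m - 1) / (m + 1) < r) (hr₂ : r < 1) :
    (m - 1) ^ 2 - (2 * m ^ 2 + 2) * r ^ 2 + (m + 1) ^ 2 * r ^ 4 ≤ 0 := by
  have hr : m - 1 < (m + 1) * r := by rwa [div_lt_iff₀' (by linarith)] at hr₁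
  have hfactor : (m - 1) ^ 2 - (2 * m ^ 2 + 2) * r ^ 2 + (m + 1) ^ 2 * r ^ 4
      = -((1 - r ^ 2) * (((m + 1) * r) ^ 2 - (m - 1) ^ 2)) := by ring
  rw [hfactor, neg_nonpos]
  apply mul_nonneg <;> nlinarith

lemma sq_add_neg_discriminant (m r : ℝ) :
    ((m + 1) * r ^ 2 + (1 - m)) ^ 2
      + -((m - 1) ^ 2 - (2 * m ^ 2 + 2) * r ^ 2 + (m + 1) ^ 2 * r ^ 4) = (2 * r) ^ 2 := by
  ring

/-- for `(n−1)/(n+1) < |ζ| < 1` the ramification points `a_±(ζ)` lie on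
the unit circle. -/
theorem stmt_9 (n : ℕ) (hn : 2 ≤ n) (ζ : ℂ)
    (h1 : ((n : ℝ) - 1) / ((n : ℝ) + 1) < ‖ζ‖) (h2 : ‖ζ‖ < 1) :
    ‖aPlusIm n ζ‖ = 1 ∧ ‖aMinusIm n ζ‖ = 1 := by
  have hm : (1 : ℝ) ≤ n := by exact_mod_cast (by omega : 1 ≤ n)
  have hζ : 0 < ‖ζ‖ := lt_of_le_of_lt (div_nonneg (by linarith) (by linarith)) h1
  have hc : 2 * (starRingEnd ℂ) ζ ≠ 0 := by simpa using norm_pos_iff.mp hζ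
  have hsq := Real.sq_sqrt (neg_nonneg.mpr (discriminant_nonpos hm h1 h2))
  have hmod : (((n : ℝ) + 1) * ‖ζ‖ ^ 2 + (1 - (n : ℝ))) ^ 2
      + Real.sqrt (-(((n : ℝ) - 1) ^ 2 - (2 * (n : ℝ) ^ 2 + 2) * ‖ζ‖ ^ 2
        + ((n : ℝ) + 1) ^ 2 * ‖ζ‖ ^ 4)) ^ 2 = ‖2 * (starRingEnd ℂ) ζ‖ ^ 2 := by
    rw [hsq, sq_add_neg_discriminant, norm_mul, norm_conj, Complex.norm_two]
  exact ⟨norm_add_I_mul_div_eq_one hc hmod, norm_sub_I_mul_div_eq_one hc hmod⟩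
end

section
/- Let U ∈ U(n+1) be a unitary matrix with upper-left entry u₁₁ and lower-right n×n block U''. Suppose a germ of holomorphic map f = (f₁, f_{2,1}, …, f_{2,n}) at 0 with f(0) = 0 satisfies (U'' − f₁(w)·Iₙ)(f_{2,1}(w),…,f_{2,n}(w))ᵀ = −f₁(w)·(u_{2,1},…,u_{n+1,1})ᵀ near w = 0, and det U'' = 0. Then f₁ ≡ 0. -/
/-- if the germ `f = (f₁, f₂)` at `0` satisfies
`(U'' − f₁(w) Iₙ) f₂(w) = − f₁(w) v` near `0`, where `U''` is the lower-right `n×n`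
block of a unitary `U ∈ U(n+1)` and `v` its first column below the corner, and
`det U'' = 0`, then `f₁ ≡ 0` as a germ. -/
theorem stmt_12 (n : ℕ) (U : Matrix (Fin (n + 1)) (Fin (n + 1)) ℂ)
    (hU : U ∈ Matrix.unitaryGroup (Fin (n + 1)) ℂ)
    (f1 : ℂ → ℂ) (f2 : Fin n → ℂ → ℂ)
    (hf1 : AnalyticAt ℂ f1 0) (hf2 : ∀ j, AnalyticAt ℂ (f2 j) 0)
    (hf10 : f1 0 = 0) (hf20 : ∀ j, f2 j 0 = 0)
    (ε : ℝ) (hε : 0 < ε)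
    (heq : ∀ w ∈ Metric.ball (0 : ℂ) ε, ∀ i : Fin n,
      (∑ j : Fin n, U i.succ j.succ * f2 j w) - f1 w * f2 i w = -(f1 w) * U i.succ 0)
    (hdet : Matrix.det (fun i j : Fin n => U i.succ j.succ) = 0) :
    ∀ᶠ w in nhds (0 : ℂ), f1 w = 0 := by
  -- left null vector of U''
  obtain ⟨c, hc0, hcU⟩ :=
    (Matrix.exists_vecMul_eq_zero_iff (M := Matrix.of fun i j : Fin n => U i.succ j.succ)).2 hdet
  have hcU' : ∀ j : Fin n, ∑ i : Fin n, c i * U i.succ j.succ = 0 := by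
    intro j
    have := congrFun hcU j
    simpa [Matrix.vecMul, dotProduct] using this
  set a : ℂ := ∑ i : Fin n, c i * U i.succ 0 with ha
  -- a ≠ 0
  have hUU : U * star U = 1 := (Matrix.mem_unitaryGroup_iff).1 hU
  have haz : a ≠ 0 := by
    intro h0
    apply hc0
    set d : Fin (n + 1) → ℂ := fun k => Fin.cases 0 c k with hd
    have hdU : Matrix.vecMul d U = 0 := by
      funext k
      induction k using Fin.cases with
      | zero =>
        have : ∑ i : Fin (n+1), d i * U i 0 = 0 := by
          rw [Fin.sum_univ_succ]
          simpa [hd] using h0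
        simpa [Matrix.vecMul, dotProduct] using this
      | succ j =>
        have : ∑ i : Fin (n+1), d i * U i j.succ = 0 := by
          rw [Fin.sum_univ_succ]
          simpa [hd] using hcU' j
        simpa [Matrix.vecMul, dotProduct] using this
    have hdz : d = 0 := by
      have h : Matrix.vecMul (Matrix.vecMul d U) (star U) = d := by
        rw [Matrix.vecMul_vecMul, hUU, Matrix.vecMul_one]
      rw [hdU] at h
      simpa [Matrix.zero_vecMul] using h.symm
    funext i
    have := congrFun hdz i.succ
    simpa [hd] using this
  -- key identity on the ball : f1 w * (a - ∑ c i * f2 i w) = 0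
  have key : ∀ w ∈ Metric.ball (0 : ℂ) ε,
      f1 w * (a - ∑ i : Fin n, c i * f2 i w) = 0 := by
    intro w hw
    have hsum : ∑ i : Fin n, c i * ((∑ j : Fin n, U i.succ j.succ * f2 j w)
        - f1 w * f2 i w) = ∑ i : Fin n, c i * (-(f1 w) * U i.succ 0) := by
      exact Finset.sum_congr rfl fun i _ => by rw [heq w hw i]
    have h1 : ∑ i : Fin n, c i * ∑ j : Fin n, U i.succ j.succ * f2 j w = 0 := by
      simp_rw [Finset.mul_sum]
      rw [Finset.sum_comm]
      refine Finset.sum_eq_zero fun j _ => ?_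
      have h : ∑ i : Fin n, c i * (U i.succ j.succ * f2 j w)
          = (∑ i : Fin n, c i * U i.succ j.succ) * f2 j w := by
        rw [Finset.sum_mul]; exact Finset.sum_congr rfl fun i _ => by ring
      rw [h, hcU' j, zero_mul]
    have h2 : ∑ i : Fin n, c i * (-(f1 w) * U i.succ 0) = -(f1 w) * a := by
      rw [ha, Finset.mul_sum]
      exact Finset.sum_congr rfl fun i _ => by ring
    have h3 : ∑ i : Fin n, c i * ((∑ j : Fin n, U i.succ j.succ * f2 j w)
        - f1 w * f2 i w)
        = - (f1 w * ∑ i : Fin n, c i * f2 i w) := by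
      have : ∑ i : Fin n, c i * ((∑ j : Fin n, U i.succ j.succ * f2 j w)
          - f1 w * f2 i w)
          = (∑ i : Fin n, c i * ∑ j : Fin n, U i.succ j.succ * f2 j w)
            - ∑ i : Fin n, c i * (f1 w * f2 i w) := by
        rw [← Finset.sum_sub_distrib]
        exact Finset.sum_congr rfl fun i _ => by ring
      rw [this, h1, zero_sub, Finset.mul_sum]
      congr 1
      exact Finset.sum_congr rfl fun i _ => by ring
    rw [h3, h2] at hsum
    linear_combination hsum
  -- the factor (a - ∑ c i * f2 i w) is nonzero near 0
  have hcont : ContinuousAt (fun w => a - ∑ i : Fin n, c i * f2 i w) 0 := by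
    apply ContinuousAt.sub continuousAt_const
    exact tendsto_finset_sum _ fun i _ =>
      (continuousAt_const.mul (hf2 i).continuousAt)
  have hval : (fun w => a - ∑ i : Fin n, c i * f2 i w) 0 ≠ 0 := by
    simp [hf20, haz]
  have hne : ∀ᶠ w in nhds (0 : ℂ),
      a - ∑ i : Fin n, c i * f2 i w ≠ 0 :=
    hcont.eventually_ne hval
  have hball : ∀ᶠ w in nhds (0 : ℂ), w ∈ Metric.ball (0 : ℂ) ε :=
    Metric.ball_mem_nhds 0 hε
  filter_upwards [hne, hball] with w hw1 hw2
  have := key w hw2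
  exact (mul_eq_zero.1 this).resolve_right hw1
end
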